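/- Let X and Y be real p×n matrices. Then tr(((X Xᵀ − Y Yᵀ)²)^{1/2}) ≤ tr((X − Y)(X − Y)ᵀ) + 2·tr(((X − Y) Yᵀ Y (X − Y)ᵀ)^{1/2}); that is, the sum of the singular values of X Xᵀ − Y Yᵀ is at most the sum of the singular values of (X − Y)(X − Y)ᵀ plus twice the sum of the singular values of (X − Y) Yᵀ. -/

import Mathlib

/-!
With `D = X - Y`, the symmetric matrix `S = X Xᵀ - Y Yᵀ` splits as `D Dᵀ + D Yᵀ + (D Yᵀ)ᵀ`.
Its sign `U = sign(S)` is a symmetric contraction with `U ≤ 1` and `|S| = S U`, so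
`tr |S| = tr (D Dᵀ U) + 2 tr (D Yᵀ U)`. The first term is at most `tr (D Dᵀ)` because
`1 - U ⪰ 0`; the second is at most the nuclear norm of `D Yᵀ`, by Cauchy–Schwarz applied
column by column in an orthonormal eigenbasis of `D Yᵀ (D Yᵀ)ᵀ`.
-/

open Matrix
open scoped Matrix.Norms.L2Operator

/-- The positive semidefinite square root of a real matrix (zero junk value when the matrix
is not positive semidefinite). -/
noncomputable def matSqrt {n : Type*} [Fintype n] [DecidableEq n]
    (A : Matrix n n ℝ) : Matrix n n ℝ :=
  letI := Classical.propDecidable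
  if h : A.PosSemidef then
    (h.1.eigenvectorUnitary : Matrix n n ℝ) * diagonal ((↑) ∘ Real.sqrt ∘ h.1.eigenvalues) *
      (star h.1.eigenvectorUnitary : Matrix n n ℝ) else 0

/-- `A^{−1/2}`: the inverse of the positive semidefinite square root. -/
noncomputable def matInvSqrt {n : Type*} [Fintype n] [DecidableEq n]
    (A : Matrix n n ℝ) : Matrix n n ℝ :=
  (matSqrt A)⁻¹

open scoped MatrixOrder

namespace Matrix

variable {m k : Type*} [Fintype m] [DecidableEq m] [Fintype k]

lemma matSqrt_eq_isHermitian_cfc {A : Matrix m m ℝ} (hA : A.PosSemidef) :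
    matSqrt A = hA.1.cfc Real.sqrt := by
  -- `matSqrt` diagonalises with a classical `DecidableEq` instance: the sides agree up to instances
  show _ = (hA.1.eigenvectorUnitary : Matrix m m ℝ) * diagonal (fun i => √(hA.1.eigenvalues i)) *
    star (hA.1.eigenvectorUnitary : Matrix m m ℝ)
  rw [matSqrt, dif_pos hA]
  congr!

lemma matSqrt_eq_cfcSqrt {A : Matrix m m ℝ} (hA : A.PosSemidef) : matSqrt A = CFC.sqrt A := by
  rw [CFC.sqrt_eq_real_sqrt A hA.nonneg, cfcₙ_eq_cfc, hA.1.cfc_eq, matSqrt_eq_isHermitian_cfc hA]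

lemma matSqrt_conjTranspose_mul_self (S : Matrix m m ℝ) : matSqrt (Sᴴ * S) = CFC.abs S := by
  rw [matSqrt_eq_cfcSqrt (posSemidef_conjTranspose_mul_self S), CFC.abs, star_eq_conjTranspose]

lemma trace_matSqrt {A : Matrix m m ℝ} (hA : A.PosSemidef) :
    (matSqrt A).trace = ∑ i, √(hA.1.eigenvalues i) := by
  rw [matSqrt_eq_isHermitian_cfc hA, IsHermitian.cfc, Unitary.conjStarAlgAut_apply,
    trace_mul_cycle, Unitary.coe_star_mul_self, one_mul, trace_diagonal]
  rfl

lemma trace_mul_nonneg {A B : Matrix m m ℝ} (hA : A.PosSemidef) (hB : B.PosSemidef) :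
    0 ≤ (A * B).trace := by
  obtain ⟨C, rfl⟩ := CStarAlgebra.nonneg_iff_eq_star_mul_self.mp hA.nonneg
  rw [Matrix.mul_assoc, trace_mul_comm, star_eq_conjTranspose]
  exact (hB.mul_mul_conjTranspose_same C).trace_nonneg

lemma trace_mul_le_trace_of_le_one {A U : Matrix m m ℝ} (hA : A.PosSemidef) (hU : U ≤ 1) :
    (A * U).trace ≤ A.trace := by
  have := trace_mul_nonneg hA (le_iff.mp hU)
  rwa [Matrix.mul_sub, Matrix.mul_one, trace_sub, sub_nonneg] at this

omit [Fintype m] [DecidableEq m] in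
lemma transpose_mul_apply_self_le_sqrt_mul_sqrt (P Q : Matrix k m ℝ) (j : m) :
    (Pᵀ * Q) j j ≤ √((Pᵀ * P) j j) * √((Qᵀ * Q) j j) := by
  simpa [mul_apply, pow_two] using
    Real.sum_mul_le_sqrt_mul_sqrt Finset.univ (fun l => P l j) (fun l => Q l j)

lemma trace_mul_le_trace_matSqrt (B : Matrix m k ℝ) (U : Matrix k m ℝ) (hU : Uᵀ * U ≤ 1) :
    (B * U).trace ≤ (matSqrt (B * Bᵀ)).trace := by
  have hBB : (B * Bᵀ).PosSemidef := by simpa using posSemidef_self_mul_conjTranspose B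
  set W : Matrix m m ℝ := (hBB.1.eigenvectorUnitary : Matrix m m ℝ)
  have hWWt : W * Wᵀ = 1 := by
    simpa [star_eq_conjTranspose] using Unitary.coe_mul_star_self hBB.1.eigenvectorUnitary
  have hWtW : Wᵀ * W = 1 := by
    simpa [star_eq_conjTranspose] using Unitary.coe_star_mul_self hBB.1.eigenvectorUnitary
  have hdiag : Wᵀ * (B * Bᵀ) * W = diagonal hBB.1.eigenvalues := by
    simpa [Unitary.conjStarAlgAut_apply, star_eq_conjTranspose] using
      hBB.1.conjStarAlgAut_star_eigenvectorUnitary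
  have hUW : ∀ j, ((U * W)ᵀ * (U * W)) j j ≤ 1 := by
    intro j
    have := (le_iff.mp (star_left_conjugate_le_conjugate hU W)).diag_nonneg (i := j)
    simpa [star_eq_conjTranspose, Matrix.mul_assoc, hWtW] using this
  have hBW : ∀ j, ((Bᵀ * W)ᵀ * (Bᵀ * W)) j j = hBB.1.eigenvalues j := fun j => by
    rw [transpose_mul, transpose_transpose, Matrix.mul_assoc, ← Matrix.mul_assoc B,
      ← Matrix.mul_assoc, hdiag, diagonal_apply_eq]
  calc (B * U).trace = (Wᵀ * (B * U) * W).trace := by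
        rw [trace_mul_cycle, hWWt, Matrix.one_mul]
    _ = ∑ j, ((Bᵀ * W)ᵀ * (U * W)) j j := by
        simp only [transpose_mul, transpose_transpose, Matrix.mul_assoc]
        rfl
    _ ≤ ∑ j, √(hBB.1.eigenvalues j) * 1 := by
        gcongr with j
        refine (transpose_mul_apply_self_le_sqrt_mul_sqrt _ _ j).trans ?_
        rw [hBW]
        gcongr
        exact Real.sqrt_le_one.mpr (hUW j)
    _ = (matSqrt (B * Bᵀ)).trace := by simp [trace_matSqrt hBB]

lemma IsHermitian.exists_mul_eq_cfcAbs {S : Matrix m m ℝ} (hS : S.IsHermitian) :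
    ∃ U : Matrix m m ℝ, Uᵀ = U ∧ U ≤ 1 ∧ Uᵀ * U ≤ 1 ∧ S * U = CFC.abs S := by
  have hS' : IsSelfAdjoint S := hS
  have hsign : ContinuousOn (fun x : ℝ => (SignType.sign x : ℝ)) (spectrum ℝ S) :=
    finite_real_spectrum.continuousOn _
  set U := cfc (fun x : ℝ => (SignType.sign x : ℝ)) S
  have hUt : Uᵀ = U := by
    have : IsSelfAdjoint U := cfc_predicate _ S
    rwa [IsSelfAdjoint, star_eq_conjTranspose, conjTranspose_eq_transpose_of_trivial] at this
  refine ⟨U, hUt, cfc_le_one _ _ fun x _ => ?_, ?_, ?_⟩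
  · rcases lt_trichotomy x 0 with h | h | h <;> simp [h]
  · rw [hUt, ← cfc_mul ..]
    refine cfc_le_one _ _ fun x _ => ?_
    rcases lt_trichotomy x 0 with h | h | h <;> simp [h]
  · rw [CFC.abs_eq_cfc_norm S]
    conv_lhs => rw [← cfc_id' ℝ S]
    rw [← cfc_mul ..]
    exact cfc_congr fun x _ => by simp [self_mul_sign]

end Matrix

/-- For real `p×n` matrices `X, Y`, the nuclear norm of `X Xᵀ − Y Yᵀ`
is bounded by the nuclear norm of `(X − Y)(X − Y)ᵀ` plus twice the nuclear norm of
`(X − Y) Yᵀ`: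
`tr(((X Xᵀ − Y Yᵀ)²)^{1/2}) ≤ tr((X − Y)(X − Y)ᵀ) + 2·tr(((X − Y) Yᵀ Y (X − Y)ᵀ)^{1/2})`. -/
theorem nuclear_norm_gram_difference_bound
    (p n : ℕ) (X Y : Matrix (Fin p) (Fin n) ℝ) :
    (matSqrt ((X * Xᵀ - Y * Yᵀ) * (X * Xᵀ - Y * Yᵀ))).trace ≤
      ((X - Y) * (X - Y)ᵀ).trace + 2 * (matSqrt ((X - Y) * Yᵀ * Y * (X - Y)ᵀ)).trace := by
  set D := X - Y
  set S := X * Xᵀ - Y * Yᵀ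
  have hS : S.IsHermitian := by
    simpa using (isHermitian_mul_conjTranspose_self X).sub (isHermitian_mul_conjTranspose_self Y)
  obtain ⟨U, hUt, hU, hUU, hSU⟩ := hS.exists_mul_eq_cfcAbs
  have hdecomp : S = D * Dᵀ + D * Yᵀ + (D * Yᵀ)ᵀ := by
    simp only [S, D, transpose_sub, transpose_mul, transpose_transpose, Matrix.sub_mul,
      Matrix.mul_sub]
    abel
  have hcross : ((D * Yᵀ)ᵀ * U).trace = (D * Yᵀ * U).trace := by
    rw [← trace_transpose, transpose_mul, transpose_transpose, hUt, trace_mul_comm]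
  calc (matSqrt (S * S)).trace = (S * U).trace := by
        nth_rw 1 [← hS.eq]
        rw [matSqrt_conjTranspose_mul_self, hSU]
    _ = (D * Dᵀ * U).trace + 2 * (D * Yᵀ * U).trace := by
        rw [hdecomp, Matrix.add_mul, Matrix.add_mul, trace_add, trace_add, hcross]
        ring
    _ ≤ (D * Dᵀ).trace + 2 * (matSqrt (D * Yᵀ * (D * Yᵀ)ᵀ)).trace := by
        gcongr
        · exact trace_mul_le_trace_of_le_one (by simpa using posSemidef_self_mul_conjTranspose D) hU
        · exact trace_mul_le_trace_matSqrt _ _ hUU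
    _ = (D * Dᵀ).trace + 2 * (matSqrt (D * Yᵀ * Y * Dᵀ)).trace := by
        rw [transpose_mul, transpose_transpose, ← Matrix.mul_assoc]
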